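/- arXiv:2311.13767 — 6 statements merged into one kernel-verified Lean document; each statement's English description precedes it below -/
import Mathlib

section
/- Let p ≥ 1, let S ⊆ {1,…,p}, and let Γ, Γ̂ be real p×p matrices. Then for every vector a ∈ ℝ^p satisfying the cone condition ‖a_{S^c}‖₁ ≤ 3‖a_S‖₁, one has aᵀΓa − aᵀΓ̂a ≤ 16·|S|·‖a_S‖₂²·max_{i,j∈{1,…,p}} |Γ̂_{ij} − Γ_{ij}|. -/
open Matrix Finset

/-- Key quadratic-form perturbation inequality (proof of Lemma 1):
for any vector `a` in the cone `‖a_{Sᶜ}‖₁ ≤ 3‖a_S‖₁`,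
`aᵀΓa − aᵀΓ̂a ≤ 16 |S| ‖a_S‖₂² max_{i,j} |Γ̂_{ij} − Γ_{ij}|`. -/
theorem quadratic_form_perturbation
    (p : ℕ) (hp : 1 ≤ p) (S : Finset (Fin p))
    (Γ Γhat : Matrix (Fin p) (Fin p) ℝ)
    (a : Fin p → ℝ)
    (hcone : ∑ j ∈ Sᶜ, |a j| ≤ 3 * ∑ j ∈ S, |a j|) :
    a ⬝ᵥ Γ.mulVec a - a ⬝ᵥ Γhat.mulVec a ≤
      16 * (S.card : ℝ) * (∑ j ∈ S, (a j) ^ 2) *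
        (⨆ ij : Fin p × Fin p, |Γhat ij.1 ij.2 - Γ ij.1 ij.2|) := by
  haveI : Nonempty (Fin p) := ⟨⟨0, hp⟩⟩
  set M := ⨆ ij : Fin p × Fin p, |Γhat ij.1 ij.2 - Γ ij.1 ij.2| with hMdef
  have hbdd : BddAbove (Set.range fun ij : Fin p × Fin p => |Γhat ij.1 ij.2 - Γ ij.1 ij.2|) :=
    Set.Finite.bddAbove (Set.finite_range _)
  have hM : ∀ i j : Fin p, |Γhat i j - Γ i j| ≤ M := fun i j =>
    le_ciSup hbdd (i, j)
  have hM0 : 0 ≤ M := le_trans (abs_nonneg _) (hM ⟨0, hp⟩ ⟨0, hp⟩)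
  have hS0 : 0 ≤ ∑ j ∈ S, |a j| := Finset.sum_nonneg fun j _ => abs_nonneg _
  -- step 1: expand and bound by (∑ |a|)² M
  have key : a ⬝ᵥ Γ.mulVec a - a ⬝ᵥ Γhat.mulVec a ≤ (∑ i, |a i|) ^ 2 * M := by
    have expand : a ⬝ᵥ Γ.mulVec a - a ⬝ᵥ Γhat.mulVec a
        = ∑ i, ∑ j, a i * a j * (Γ i j - Γhat i j) := by
      simp only [dotProduct, Matrix.mulVec, dotProduct, Finset.mul_sum, ← Finset.sum_sub_distrib]
      congr 1; ext i; congr 1; ext j; ring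
    rw [expand]
    have sqexp : (∑ i, |a i|) ^ 2 * M = ∑ i, ∑ j, |a i| * |a j| * M := by
      rw [sq, Finset.sum_mul_sum]
      rw [Finset.sum_mul]
      congr 1; ext i
      rw [Finset.sum_mul]
    rw [sqexp]
    apply Finset.sum_le_sum
    intro i _
    apply Finset.sum_le_sum
    intro j _
    calc a i * a j * (Γ i j - Γhat i j) ≤ |a i * a j * (Γ i j - Γhat i j)| := le_abs_self _
      _ = |a i| * |a j| * |Γhat i j - Γ i j| := by
          rw [abs_mul, abs_mul, abs_sub_comm]
      _ ≤ |a i| * |a j| * M := by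
          apply mul_le_mul_of_nonneg_left (hM i j) (by positivity)
  have hsum : ∑ i, |a i| ≤ 4 * ∑ j ∈ S, |a j| := by
    rw [← Finset.sum_add_sum_compl S]
    linarith
  have hcs : (∑ j ∈ S, |a j|) ^ 2 ≤ (S.card : ℝ) * ∑ j ∈ S, (a j) ^ 2 := by
    have := sq_sum_le_card_mul_sum_sq (s := S) (f := fun j => |a j|)
    simpa [sq_abs] using this
  calc a ⬝ᵥ Γ.mulVec a - a ⬝ᵥ Γhat.mulVec a ≤ (∑ i, |a i|) ^ 2 * M := key
    _ ≤ (4 * ∑ j ∈ S, |a j|) ^ 2 * M := by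
        apply mul_le_mul_of_nonneg_right _ hM0
        apply pow_le_pow_left₀ (Finset.sum_nonneg fun j _ => abs_nonneg _) hsum
    _ = 16 * (∑ j ∈ S, |a j|) ^ 2 * M := by ring
    _ ≤ 16 * ((S.card : ℝ) * ∑ j ∈ S, (a j) ^ 2) * M := by
        apply mul_le_mul_of_nonneg_right _ hM0
        linarith
    _ = 16 * (S.card : ℝ) * (∑ j ∈ S, (a j) ^ 2) * M := by ring
end

section
/- Let p ≥ 1, let S ⊆ {1,…,p}, let Γ, Γ̂ be real p×p matrices, and let c₃ > 0. Suppose (i) aᵀΓa ≥ c₃·‖a_S‖₂² for every a ∈ ℝ^p with ‖a_{S^c}‖₁ ≤ 3‖a_S‖₁ (restricted eigenvalue condition for Γ), and (ii) 16·|S|·max_{i,j∈{1,…,p}} |Γ̂_{ij} − Γ_{ij}| ≤ c₃/2. Then aᵀΓ̂a ≥ (c₃/2)·‖a_S‖₂² for every a ∈ ℝ^p with ‖a_{S^c}‖₁ ≤ 3‖a_S‖₁. -/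
open Matrix Finset

/-- Deterministic core of Lemma 1: the restricted eigenvalue condition transfers
from `Γ` to `Γ̂` (up to a factor 1/2) when `16 |S| max_{i,j}|Γ̂_{ij} − Γ_{ij}| ≤ c₃/2`. -/
theorem restricted_eigenvalue_transfer
    (p : ℕ) (hp : 1 ≤ p) (S : Finset (Fin p))
    (Γ Γhat : Matrix (Fin p) (Fin p) ℝ)
    (c3 : ℝ) (hc3 : 0 < c3)
    (hRE : ∀ a : Fin p → ℝ, (∑ j ∈ Sᶜ, |a j|) ≤ 3 * ∑ j ∈ S, |a j| →
      c3 * (∑ j ∈ S, (a j) ^ 2) ≤ a ⬝ᵥ Γ.mulVec a)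
    (hmax : 16 * (S.card : ℝ) *
        (⨆ ij : Fin p × Fin p, |Γhat ij.1 ij.2 - Γ ij.1 ij.2|) ≤ c3 / 2) :
    ∀ a : Fin p → ℝ, (∑ j ∈ Sᶜ, |a j|) ≤ 3 * ∑ j ∈ S, |a j| →
      c3 / 2 * (∑ j ∈ S, (a j) ^ 2) ≤ a ⬝ᵥ Γhat.mulVec a := by
  intro a ha
  haveI : NeZero p := ⟨Nat.one_le_iff_ne_zero.mp hp⟩
  set δ : ℝ := ⨆ ij : Fin p × Fin p, |Γhat ij.1 ij.2 - Γ ij.1 ij.2| with hδdef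
  have hbdd : BddAbove (Set.range fun ij : Fin p × Fin p => |Γhat ij.1 ij.2 - Γ ij.1 ij.2|) :=
    Set.Finite.bddAbove (Set.finite_range _)
  have hδ_ge : ∀ i j : Fin p, |Γhat i j - Γ i j| ≤ δ := fun i j => le_ciSup hbdd (i, j)
  have hδ0 : 0 ≤ δ := le_trans (abs_nonneg _) (hδ_ge 0 0)
  set T : ℝ := ∑ j ∈ S, |a j| with hT
  set Q : ℝ := ∑ j ∈ S, (a j) ^ 2 with hQ
  have hT0 : 0 ≤ T := Finset.sum_nonneg fun _ _ => abs_nonneg _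
  have hQ0 : 0 ≤ Q := Finset.sum_nonneg fun _ _ => sq_nonneg _
  have hL1 : (∑ j, |a j|) ≤ 4 * T := by
    rw [← Finset.sum_add_sum_compl S fun j => |a j|]
    linarith
  have hcs : T ^ 2 ≤ (S.card : ℝ) * Q := by
    have := sq_sum_le_card_mul_sum_sq (s := S) (f := fun j => |a j|)
    simpa [sq_abs] using this
  have hΔ : |a ⬝ᵥ (Γhat - Γ).mulVec a| ≤ δ * (∑ j, |a j|) ^ 2 := by
    have h1 : a ⬝ᵥ (Γhat - Γ).mulVec a = ∑ i, ∑ j, a i * ((Γhat i j - Γ i j) * a j) := by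
      simp [dotProduct, mulVec, Finset.mul_sum]
    rw [h1]
    calc |∑ i, ∑ j, a i * ((Γhat i j - Γ i j) * a j)|
        ≤ ∑ i, |∑ j, a i * ((Γhat i j - Γ i j) * a j)| := Finset.abs_sum_le_sum_abs _ _
      _ ≤ ∑ i, ∑ j, |a i * ((Γhat i j - Γ i j) * a j)| :=
          Finset.sum_le_sum fun i _ => Finset.abs_sum_le_sum_abs _ _
      _ ≤ ∑ i, ∑ j, |a i| * (δ * |a j|) := by
          refine Finset.sum_le_sum fun i _ => Finset.sum_le_sum fun j _ => ?_
          rw [abs_mul, abs_mul]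
          exact mul_le_mul_of_nonneg_left
            (mul_le_mul_of_nonneg_right (hδ_ge i j) (abs_nonneg _)) (abs_nonneg _)
      _ = δ * (∑ j, |a j|) ^ 2 := by
          rw [sq, Finset.sum_mul_sum, Finset.mul_sum]
          refine Finset.sum_congr rfl fun i _ => ?_
          rw [Finset.mul_sum]
          exact Finset.sum_congr rfl fun j _ => by ring
  have hΔ2 : |a ⬝ᵥ (Γhat - Γ).mulVec a| ≤ c3 / 2 * Q := by
    calc |a ⬝ᵥ (Γhat - Γ).mulVec a| ≤ δ * (∑ j, |a j|) ^ 2 := hΔ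
      _ ≤ δ * (4 * T) ^ 2 := by
          apply mul_le_mul_of_nonneg_left _ hδ0
          apply pow_le_pow_left₀ (Finset.sum_nonneg fun _ _ => abs_nonneg _) hL1
      _ = 16 * (δ * T ^ 2) := by ring
      _ ≤ 16 * (δ * ((S.card : ℝ) * Q)) :=
          mul_le_mul_of_nonneg_left (mul_le_mul_of_nonneg_left hcs hδ0) (by norm_num)
      _ = 16 * (S.card : ℝ) * δ * Q := by ring
      _ ≤ c3 / 2 * Q := mul_le_mul_of_nonneg_right hmax hQ0
  have hsplit : a ⬝ᵥ Γhat.mulVec a = a ⬝ᵥ Γ.mulVec a + a ⬝ᵥ (Γhat - Γ).mulVec a := by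
    rw [Matrix.sub_mulVec, dotProduct_sub]; ring
  have hREa := hRE a ha
  have hlow : -(c3 / 2 * Q) ≤ a ⬝ᵥ (Γhat - Γ).mulVec a := neg_le_of_abs_le hΔ2
  rw [hsplit]
  linarith
end

section
/- Let n, p ≥ 1, let Φ be a real n×p matrix, W a symmetric positive semidefinite real n×n matrix, θ₀ ∈ ℝ^p with support S = {j : θ₀,ⱼ ≠ 0}, ε ∈ ℝ^n, y = Φθ₀ + ε, and λ > 0. Suppose θ̂ ∈ ℝ^p satisfies the basic inequality (1/(2n))·(y − Φθ̂)ᵀW(y − Φθ̂) + λ‖θ̂‖₁ ≤ (1/(2n))·(y − Φθ₀)ᵀW(y − Φθ₀) + λ‖θ₀‖₁, and suppose ‖ΦᵀWε/n‖∞ ≤ λ/2. Then, writing δ = θ̂ − θ₀, one has (1/n)·δᵀΦᵀWΦδ ≤ 3λ·‖δ_S‖₁. -/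
/-!
Write `δ = θ̂ - θ₀`. Since `y - Φθ̂ = ε - Φδ`, expanding the quadratic form turns the basic
inequality into `(1/n) δᵀΦᵀWΦδ ≤ 2 ⟨ΦᵀWε/n, δ⟩ + 2λ (‖θ₀‖₁ - ‖θ̂‖₁)`. The noise bound and
Hölder give `2 ⟨ΦᵀWε/n, δ⟩ ≤ λ (‖δ_S‖₁ + ‖δ_{Sᶜ}‖₁)`, and because `θ₀` vanishes off `S` the
triangle inequality gives `‖θ₀‖₁ - ‖θ̂‖₁ ≤ ‖δ_S‖₁ - ‖δ_{Sᶜ}‖₁`; the `‖δ_{Sᶜ}‖₁` terms then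
combine to `-λ ‖δ_{Sᶜ}‖₁ ≤ 0`.
-/

open Matrix Finset

namespace Matrix

variable {ι κ R : Type*} [Fintype ι] [Fintype κ]

theorem transpose_mul_mul_quadForm [CommSemiring R] (Φ : Matrix ι κ R) (W : Matrix ι ι R)
    (δ : κ → R) : δ ⬝ᵥ (Φᵀ * W * Φ) *ᵥ δ = (Φ *ᵥ δ) ⬝ᵥ W *ᵥ (Φ *ᵥ δ) := by
  rw [← mulVec_mulVec, ← mulVec_mulVec, dotProduct_mulVec, vecMul_transpose]

theorem sub_mulVec_quadForm [CommRing R] {W : Matrix ι ι R} (hW : W.IsSymm)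
    (Φ : Matrix ι κ R) (ε : ι → R) (δ : κ → R) :
    (ε - Φ *ᵥ δ) ⬝ᵥ W *ᵥ (ε - Φ *ᵥ δ)
      = ε ⬝ᵥ W *ᵥ ε - 2 * ((Φᵀ *ᵥ W *ᵥ ε) ⬝ᵥ δ) + δ ⬝ᵥ (Φᵀ * W * Φ) *ᵥ δ := by
  have hcross : (Φ *ᵥ δ) ⬝ᵥ W *ᵥ ε = (Φᵀ *ᵥ W *ᵥ ε) ⬝ᵥ δ := by
    rw [mulVec_transpose, ← dotProduct_mulVec, dotProduct_comm]
  have hsymm : ε ⬝ᵥ W *ᵥ (Φ *ᵥ δ) = (Φ *ᵥ δ) ⬝ᵥ W *ᵥ ε := by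
    rw [dotProduct_mulVec, ← mulVec_transpose, hW, dotProduct_comm]
  rw [transpose_mul_mul_quadForm, mulVec_sub, sub_dotProduct, dotProduct_sub, dotProduct_sub,
    hsymm, hcross]
  ring

end Matrix

section AbsSum

variable {ι R : Type*} [Fintype ι] [CommRing R] [LinearOrder R] [IsStrictOrderedRing R]

theorem dotProduct_le_mul_sum_abs {a : ι → R} {C : R} (ha : ∀ j, |a j| ≤ C) (δ : ι → R) :
    a ⬝ᵥ δ ≤ C * ∑ j, |δ j| :=
  calc a ⬝ᵥ δ ≤ ∑ j, |a j * δ j| := (le_abs_self _).trans (abs_sum_le_sum_abs _ _)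
    _ ≤ C * ∑ j, |δ j| := by
      rw [mul_sum]
      exact sum_le_sum fun j _ ↦ by
        rw [abs_mul]; exact mul_le_mul_of_nonneg_right (ha j) (abs_nonneg _)

theorem sum_abs_sub_sum_abs_le_of_eq_zero [DecidableEq ι] (S : Finset ι) {θ₀ : ι → R}
    (h₀ : ∀ j ∉ S, θ₀ j = 0) (θ : ι → R) :
    ∑ j, |θ₀ j| - ∑ j, |θ j| ≤ ∑ j ∈ S, |θ j - θ₀ j| - ∑ j ∈ Sᶜ, |θ j - θ₀ j| := by
  rw [← sum_sub_distrib, ← sum_add_sum_compl S, sub_eq_add_neg _ (∑ j ∈ Sᶜ, _),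
    ← sum_neg_distrib]
  refine add_le_add (sum_le_sum fun j _ ↦ ?_) (sum_le_sum fun j hj ↦ ?_)
  · exact (abs_sub_abs_le_abs_sub _ _).trans_eq (abs_sub_comm _ _)
  · simp [h₀ j (mem_compl.1 hj)]

end AbsSum

theorem lasso_quadratic_form_bound_general
    (n p : ℕ) (hn : 1 ≤ n)
    (Φ : Matrix (Fin n) (Fin p) ℝ) (W : Matrix (Fin n) (Fin n) ℝ)
    (hW : W.PosSemidef)
    (θ0 θhat : Fin p → ℝ)
    (S : Finset (Fin p)) (hS : ∀ j, j ∈ S ↔ θ0 j ≠ 0)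
    (ε : Fin n → ℝ) (y : Fin n → ℝ) (hy : y = Φ.mulVec θ0 + ε)
    (lam : ℝ) (hlam : 0 < lam)
    (hbasic :
      (1 / (2 * (n : ℝ))) * ((y - Φ.mulVec θhat) ⬝ᵥ W.mulVec (y - Φ.mulVec θhat))
          + lam * ∑ j, |θhat j|
        ≤ (1 / (2 * (n : ℝ))) * ((y - Φ.mulVec θ0) ⬝ᵥ W.mulVec (y - Φ.mulVec θ0))
          + lam * ∑ j, |θ0 j|)
    (hnoise : ∀ j, |(Φᵀ.mulVec (W.mulVec ε)) j / (n : ℝ)| ≤ lam / 2) :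
    (1 / (n : ℝ)) * ((θhat - θ0) ⬝ᵥ (Φᵀ * W * Φ).mulVec (θhat - θ0))
      ≤ 3 * lam * ∑ j ∈ S, |θhat j - θ0 j| := by
  have hn₀ : (n : ℝ) ≠ 0 := Nat.cast_ne_zero.2 (by omega)
  set δ := θhat - θ0
  set a := Φᵀ *ᵥ W *ᵥ ε
  have hres : y - Φ *ᵥ θhat = ε - Φ *ᵥ δ := by rw [hy, mulVec_sub]; abel
  have hres₀ : y - Φ *ᵥ θ0 = ε := by rw [hy]; abel
  rw [hres, hres₀, sub_mulVec_quadForm (isHermitian_iff_isSymm.1 hW.1)] at hbasic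
  have hquad : 1 / (n : ℝ) * (δ ⬝ᵥ (Φᵀ * W * Φ) *ᵥ δ)
      ≤ 2 * ((n : ℝ)⁻¹ * (a ⬝ᵥ δ)) + 2 * lam * (∑ j, |θ0 j| - ∑ j, |θhat j|) := by
    have hscale : ∀ x y z : ℝ, 1 / (2 * (n : ℝ)) * (x - 2 * y + z)
        = 1 / (2 * (n : ℝ)) * x + (1 / (n : ℝ) * z - 2 * ((n : ℝ)⁻¹ * y)) / 2 := by
      intro x y z; field_simp; ring
    rw [hscale] at hbasic
    linarith
  have hcross : (n : ℝ)⁻¹ * (a ⬝ᵥ δ) ≤ lam / 2 * (∑ j ∈ S, |δ j| + ∑ j ∈ Sᶜ, |δ j|) := by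
    rw [← smul_eq_mul, ← smul_dotProduct, sum_add_sum_compl]
    exact dotProduct_le_mul_sum_abs (fun j ↦ by simpa [div_eq_inv_mul] using hnoise j) δ
  have hl1 : ∑ j, |θ0 j| - ∑ j, |θhat j| ≤ ∑ j ∈ S, |δ j| - ∑ j ∈ Sᶜ, |δ j| :=
    sum_abs_sub_sum_abs_le_of_eq_zero S (fun j hj ↦ not_not.1 (mt (hS j).2 hj)) θhat
  have hoff : 0 ≤ ∑ j ∈ Sᶜ, |δ j| := sum_nonneg fun j _ ↦ abs_nonneg _
  change _ ≤ 3 * lam * ∑ j ∈ S, |δ j|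
  linarith [mul_le_mul_of_nonneg_left hl1 hlam.le, mul_nonneg hlam.le hoff]

/-- Quadratic-form bound in display (A.3): under the basic inequality and the
noise bound, `(1/n) δᵀΦᵀWΦδ ≤ 3λ‖δ_S‖₁` for `δ = θ̂ − θ₀`. -/
theorem lasso_quadratic_form_bound
    (n p : ℕ) (hn : 1 ≤ n) (hp : 1 ≤ p)
    (Φ : Matrix (Fin n) (Fin p) ℝ) (W : Matrix (Fin n) (Fin n) ℝ)
    (hW : W.PosSemidef)
    (θ0 θhat : Fin p → ℝ)
    (S : Finset (Fin p)) (hS : ∀ j, j ∈ S ↔ θ0 j ≠ 0)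
    (ε : Fin n → ℝ) (y : Fin n → ℝ) (hy : y = Φ.mulVec θ0 + ε)
    (lam : ℝ) (hlam : 0 < lam)
    (hbasic :
      (1 / (2 * (n : ℝ))) * ((y - Φ.mulVec θhat) ⬝ᵥ W.mulVec (y - Φ.mulVec θhat))
          + lam * ∑ j, |θhat j|
        ≤ (1 / (2 * (n : ℝ))) * ((y - Φ.mulVec θ0) ⬝ᵥ W.mulVec (y - Φ.mulVec θ0))
          + lam * ∑ j, |θ0 j|)
    (hnoise : ∀ j, |(Φᵀ.mulVec (W.mulVec ε)) j / (n : ℝ)| ≤ lam / 2) :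
    (1 / (n : ℝ)) * ((θhat - θ0) ⬝ᵥ (Φᵀ * W * Φ).mulVec (θhat - θ0))
      ≤ 3 * lam * ∑ j ∈ S, |θhat j - θ0 j| :=
  lasso_quadratic_form_bound_general n p hn Φ W hW θ0 θhat S hS ε y hy lam hlam hbasic hnoise
end

section
/- Let n, p ≥ 1, let Φ be a real n×p matrix, W a symmetric positive semidefinite real n×n matrix, θ₀ ∈ ℝ^p with support S = {j : θ₀,ⱼ ≠ 0}, ε ∈ ℝ^n, y = Φθ₀ + ε, λ > 0, and c₃ > 0. Suppose θ̂ ∈ ℝ^p satisfies the basic inequality (1/(2n))·(y − Φθ̂)ᵀW(y − Φθ̂) + λ‖θ̂‖₁ ≤ (1/(2n))·(y − Φθ₀)ᵀW(y − Φθ₀) + λ‖θ₀‖₁, that ‖ΦᵀWε/n‖∞ ≤ λ/2, and that the restricted eigenvalue condition (1/n)·aᵀΦᵀWΦa ≥ (c₃/2)·‖a_S‖₂² holds for all a ∈ ℝ^p with ‖a_{S^c}‖₁ ≤ 3‖a_S‖₁. Then, writing δ = θ̂ − θ₀, one has ‖δ_S‖₂ ≤ 6λ√|S|/c₃. -/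
/-!
Expanding the quadratic in the basic inequality bounds the prediction error `δᵀΦᵀWΦδ/(2n)` of
`δ = θ̂ - θ₀` by the noise term `δ ⬝ ΦᵀWε/n ≤ (λ/2)‖δ‖₁` plus the penalty difference
`λ(‖θ₀‖₁ - ‖θ̂‖₁) ≤ λ(‖δ_S‖₁ - ‖δ_{Sᶜ}‖₁)`, i.e. by `(λ/2)(3‖δ_S‖₁ - ‖δ_{Sᶜ}‖₁)`. Its nonnegativity
puts `δ` in the cone of the restricted eigenvalue condition, which with Cauchy–Schwarz
`‖δ_S‖₁ ≤ √|S| ‖δ_S‖₂` gives `(c₃/2)‖δ_S‖₂² ≤ 3λ√|S| ‖δ_S‖₂`.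
-/

open Matrix Finset

theorem Finset.sum_abs_le_sqrt_card_mul_sqrt_sum_sq {ι : Type*} (S : Finset ι) (a : ι → ℝ) :
    ∑ j ∈ S, |a j| ≤ √(#S) * √(∑ j ∈ S, a j ^ 2) := by
  rw [← Real.sqrt_mul (Nat.cast_nonneg _)]
  refine (le_abs_self _).trans (Real.abs_le_sqrt ?_)
  simpa only [sq_abs] using sq_sum_le_card_mul_sum_sq (s := S) (f := fun j => |a j|)

section

variable {ι m R : Type*} [Fintype ι] [Fintype m]

theorem Matrix.dotProduct_mulVec_sub_mulVec_of_isSymm [CommRing R] {W : Matrix m m R}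
    (hW : W.IsSymm) (Φ : Matrix m ι R) (ε : m → R) (δ : ι → R) :
    (ε - Φ *ᵥ δ) ⬝ᵥ W *ᵥ (ε - Φ *ᵥ δ)
      = ε ⬝ᵥ W *ᵥ ε - 2 * (δ ⬝ᵥ Φᵀ *ᵥ (W *ᵥ ε)) + δ ⬝ᵥ (Φᵀ * W * Φ) *ᵥ δ := by
  have hcross : (Φ *ᵥ δ) ⬝ᵥ W *ᵥ ε = δ ⬝ᵥ Φᵀ *ᵥ (W *ᵥ ε) := by
    rw [dotProduct_mulVec δ, vecMul_transpose]
  have hcross' : ε ⬝ᵥ W *ᵥ (Φ *ᵥ δ) = δ ⬝ᵥ Φᵀ *ᵥ (W *ᵥ ε) := by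
    rw [dotProduct_mulVec, ← mulVec_transpose, hW.eq, dotProduct_comm, hcross]
  have hquad : (Φ *ᵥ δ) ⬝ᵥ W *ᵥ (Φ *ᵥ δ) = δ ⬝ᵥ (Φᵀ * W * Φ) *ᵥ δ := by
    rw [← mulVec_mulVec, ← mulVec_mulVec, dotProduct_mulVec δ Φᵀ, vecMul_transpose]
  rw [mulVec_sub, dotProduct_sub, sub_dotProduct, sub_dotProduct, hcross, hcross', hquad]
  ring

theorem Matrix.dotProduct_le_mul_sum_abs {α : Type*} [CommRing α] [LinearOrder α]
    [IsStrictOrderedRing α] {g : ι → α} {c : α} (hg : ∀ j, |g j| ≤ c) (a : ι → α) :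
    a ⬝ᵥ g ≤ c * ∑ j, |a j| := by
  rw [dotProduct, mul_sum]
  refine sum_le_sum fun j _ => ?_
  calc a j * g j ≤ |a j| * |g j| := (le_abs_self _).trans (abs_mul _ _).le
    _ ≤ c * |a j| := by rw [mul_comm]; exact mul_le_mul_of_nonneg_right (hg j) (abs_nonneg _)

theorem sum_abs_sub_sum_abs_le_of_forall_notMem_eq_zero {α : Type*} [AddCommGroup α] [LinearOrder α]
    [IsOrderedAddMonoid α] [DecidableEq ι] {S : Finset ι} {θ₀ : ι → α}
    (hθ₀ : ∀ j ∉ S, θ₀ j = 0) (θ : ι → α) :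
    ∑ j, |θ₀ j| - ∑ j, |θ j| ≤ ∑ j ∈ S, |θ j - θ₀ j| - ∑ j ∈ Sᶜ, |θ j - θ₀ j| := by
  have hoff : ∀ j ∈ Sᶜ, θ₀ j = 0 := fun j hj => hθ₀ j (mem_compl.1 hj)
  have hon : ∑ j ∈ S, |θ₀ j| - ∑ j ∈ S, |θ j| ≤ ∑ j ∈ S, |θ j - θ₀ j| := by
    rw [← sum_sub_distrib]
    exact sum_le_sum fun j _ => (abs_sub_abs_le_abs_sub _ _).trans (abs_sub_comm _ _).le
  have hoff₀ : ∑ j ∈ Sᶜ, |θ₀ j| = 0 := sum_eq_zero fun j hj => by rw [hoff j hj, abs_zero]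
  have hoff_sub : ∑ j ∈ Sᶜ, |θ j - θ₀ j| = ∑ j ∈ Sᶜ, |θ j| :=
    sum_congr rfl fun j hj => by rw [hoff j hj, sub_zero]
  rw [← sum_add_sum_compl S, ← sum_add_sum_compl S (fun j => |θ j|), hoff₀, hoff_sub,
    add_zero, sub_add_eq_sub_sub]
  exact sub_le_sub_right hon _

end

theorem le_div_of_mul_sq_le_mul {α : Type*} [Field α] [LinearOrder α] [IsStrictOrderedRing α]
    {b c t : α} (hb : 0 ≤ b) (hc : 0 < c) (ht : 0 ≤ t) (h : c * t ^ 2 ≤ b * t) : t ≤ b / c := by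
  rw [le_div_iff₀ hc]
  rcases ht.eq_or_lt with rfl | ht
  · simpa using hb
  · exact le_of_mul_le_mul_right (by linarith [sq t]) ht

theorem lasso_l2_support_error_bound_general
    (n p : ℕ)
    (Φ : Matrix (Fin n) (Fin p) ℝ) (W : Matrix (Fin n) (Fin n) ℝ)
    (hW : W.PosSemidef)
    (θ0 θhat : Fin p → ℝ)
    (S : Finset (Fin p)) (hS : ∀ j, j ∈ S ↔ θ0 j ≠ 0)
    (ε : Fin n → ℝ) (y : Fin n → ℝ) (hy : y = Φ.mulVec θ0 + ε)
    (lam : ℝ) (hlam : 0 < lam) (c3 : ℝ) (hc3 : 0 < c3)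
    (hbasic :
      (1 / (2 * (n : ℝ))) * ((y - Φ.mulVec θhat) ⬝ᵥ W.mulVec (y - Φ.mulVec θhat))
          + lam * ∑ j, |θhat j|
        ≤ (1 / (2 * (n : ℝ))) * ((y - Φ.mulVec θ0) ⬝ᵥ W.mulVec (y - Φ.mulVec θ0))
          + lam * ∑ j, |θ0 j|)
    (hnoise : ∀ j, |(Φᵀ.mulVec (W.mulVec ε)) j / (n : ℝ)| ≤ lam / 2)
    (hRE : ∀ a : Fin p → ℝ, (∑ j ∈ Sᶜ, |a j|) ≤ 3 * ∑ j ∈ S, |a j| →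
      c3 / 2 * (∑ j ∈ S, (a j) ^ 2) ≤ (1 / (n : ℝ)) * (a ⬝ᵥ (Φᵀ * W * Φ).mulVec a)) :
    Real.sqrt (∑ j ∈ S, (θhat j - θ0 j) ^ 2) ≤ 6 * lam * Real.sqrt S.card / c3 := by
  set δ := θhat - θ0
  set z := Φᵀ *ᵥ (W *ᵥ ε)
  set Q := δ ⬝ᵥ (Φᵀ * W * Φ) *ᵥ δ
  set A := ∑ j ∈ S, |δ j|
  set B := ∑ j ∈ Sᶜ, |δ j|
  have hQ : 0 ≤ 1 / (2 * (n : ℝ)) * Q := by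
    have hPSD := (hW.conjTranspose_mul_mul_same Φ).dotProduct_mulVec_nonneg δ
    rw [conjTranspose_eq_transpose_of_trivial, star_trivial] at hPSD
    positivity
  have hbasic_δ : 1 / (2 * (n : ℝ)) * Q
      ≤ δ ⬝ᵥ (n : ℝ)⁻¹ • z + lam * (∑ j, |θ0 j| - ∑ j, |θhat j|) := by
    have hsymm : W.IsSymm := (conjTranspose_eq_transpose_of_trivial W).symm.trans hW.1
    have hres : ∀ θ, y - Φ *ᵥ θ = ε - Φ *ᵥ (θ - θ0) := fun θ => by rw [hy, mulVec_sub]; abel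
    rw [hres, hres, sub_self, mulVec_zero, sub_zero,
      dotProduct_mulVec_sub_mulVec_of_isSymm hsymm] at hbasic
    rw [dotProduct_smul, smul_eq_mul]
    linear_combination hbasic
  have hnoise_δ : δ ⬝ᵥ (n : ℝ)⁻¹ • z ≤ lam / 2 * (A + B) := by
    rw [sum_add_sum_compl]
    refine dotProduct_le_mul_sum_abs (fun j => ?_) δ
    simpa only [Pi.smul_apply, smul_eq_mul, inv_mul_eq_div] using hnoise j
  have hpen : ∑ j, |θ0 j| - ∑ j, |θhat j| ≤ A - B :=
    sum_abs_sub_sum_abs_le_of_forall_notMem_eq_zero (fun j hj => not_not.1 (mt (hS j).2 hj)) θhat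
  have hexcess : 1 / (2 * (n : ℝ)) * Q ≤ lam / 2 * (3 * A - B) := by
    linarith [mul_le_mul_of_nonneg_left hpen hlam.le]
  have hcone : B ≤ 3 * A := by nlinarith
  have hsupport : c3 / 2 * ∑ j ∈ S, δ j ^ 2 ≤ 3 * lam * A := by
    have hB : 0 ≤ lam * B := mul_nonneg hlam.le (sum_nonneg fun j _ => abs_nonneg _)
    linarith [hRE δ hcone, show 1 / (n : ℝ) * Q = 2 * (1 / (2 * n) * Q) by ring]
  have hA := sum_abs_le_sqrt_card_mul_sqrt_sum_sq S δ
  change √(∑ j ∈ S, δ j ^ 2) ≤ _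
  refine le_div_of_mul_sq_le_mul (by positivity) hc3 (Real.sqrt_nonneg _) ?_
  rw [Real.sq_sqrt (sum_nonneg fun j _ => sq_nonneg _)]
  calc c3 * ∑ j ∈ S, δ j ^ 2 ≤ 6 * lam * A := by linarith
    _ ≤ 6 * lam * (√(#S) * √(∑ j ∈ S, δ j ^ 2)) := by gcongr
    _ = _ := by ring

/-- ℓ₂-on-support error bound from combining (A.3) and (A.4):
`‖δ_S‖₂ ≤ 6λ√|S|/c₃` for `δ = θ̂ − θ₀`. -/
theorem lasso_l2_support_error_bound
    (n p : ℕ) (hn : 1 ≤ n) (hp : 1 ≤ p)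
    (Φ : Matrix (Fin n) (Fin p) ℝ) (W : Matrix (Fin n) (Fin n) ℝ)
    (hW : W.PosSemidef)
    (θ0 θhat : Fin p → ℝ)
    (S : Finset (Fin p)) (hS : ∀ j, j ∈ S ↔ θ0 j ≠ 0)
    (ε : Fin n → ℝ) (y : Fin n → ℝ) (hy : y = Φ.mulVec θ0 + ε)
    (lam : ℝ) (hlam : 0 < lam) (c3 : ℝ) (hc3 : 0 < c3)
    (hbasic :
      (1 / (2 * (n : ℝ))) * ((y - Φ.mulVec θhat) ⬝ᵥ W.mulVec (y - Φ.mulVec θhat))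
          + lam * ∑ j, |θhat j|
        ≤ (1 / (2 * (n : ℝ))) * ((y - Φ.mulVec θ0) ⬝ᵥ W.mulVec (y - Φ.mulVec θ0))
          + lam * ∑ j, |θ0 j|)
    (hnoise : ∀ j, |(Φᵀ.mulVec (W.mulVec ε)) j / (n : ℝ)| ≤ lam / 2)
    (hRE : ∀ a : Fin p → ℝ, (∑ j ∈ Sᶜ, |a j|) ≤ 3 * ∑ j ∈ S, |a j| →
      c3 / 2 * (∑ j ∈ S, (a j) ^ 2) ≤ (1 / (n : ℝ)) * (a ⬝ᵥ (Φᵀ * W * Φ).mulVec a)) :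
    Real.sqrt (∑ j ∈ S, (θhat j - θ0 j) ^ 2) ≤ 6 * lam * Real.sqrt S.card / c3 :=
  lasso_l2_support_error_bound_general n p Φ W hW θ0 θhat S hS ε y hy lam hlam c3 hc3 hbasic hnoise
    hRE
end

section
/- Let n, p ≥ 1, let Φ be a real n×p matrix, W a symmetric positive semidefinite real n×n matrix, θ₀ ∈ ℝ^p with support S = {j : θ₀,ⱼ ≠ 0}, ε ∈ ℝ^n, y = Φθ₀ + ε, λ > 0, and c₃ > 0. Suppose θ̂ ∈ ℝ^p satisfies the basic inequality (1/(2n))·(y − Φθ̂)ᵀW(y − Φθ̂) + λ‖θ̂‖₁ ≤ (1/(2n))·(y − Φθ₀)ᵀW(y − Φθ₀) + λ‖θ₀‖₁, that ‖ΦᵀWε/n‖∞ ≤ λ/2, and that the restricted eigenvalue condition (1/n)·aᵀΦᵀWΦa ≥ (c₃/2)·‖a_S‖₂² holds for all a ∈ ℝ^p with ‖a_{S^c}‖₁ ≤ 3‖a_S‖₁. Then ‖θ̂ − θ₀‖₁ ≤ 24·λ·|S|/c₃. -/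
/-!
With δ = θ̂ − θ₀, the basic inequality bounds the quadratic term δᵀΦᵀWΦδ/n by the noise term
(ΦᵀWε/n)ᵀδ ≤ λ/2 ‖δ‖₁ plus λ(‖θ₀‖₁ − ‖θ̂‖₁) ≤ λ(‖δ_S‖₁ − ‖δ_{Sᶜ}‖₁), so that
0 ≤ δᵀΦᵀWΦδ/n ≤ λ(3‖δ_S‖₁ − ‖δ_{Sᶜ}‖₁). Nonnegativity gives the cone condition, hence the
restricted eigenvalue bound c₃/2 ‖δ_S‖₂² ≤ 3λ‖δ_S‖₁, which with ‖δ_S‖₁² ≤ |S| ‖δ_S‖₂² gives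
‖δ_S‖₁ ≤ 6λ|S|/c₃; finally ‖δ‖₁ ≤ 4‖δ_S‖₁ by the cone condition.
-/

open Matrix Finset

theorem Matrix.IsSymm.sub_mulVec_dotProduct_mulVec_sub {m k R : Type*} [Fintype m] [Fintype k]
    [CommRing R] {W : Matrix m m R} (hW : W.IsSymm) (Φ : Matrix m k R) (ε : m → R) (δ : k → R) :
    (ε - Φ *ᵥ δ) ⬝ᵥ W *ᵥ (ε - Φ *ᵥ δ)
      = ε ⬝ᵥ W *ᵥ ε - 2 * ((Φᵀ *ᵥ W *ᵥ ε) ⬝ᵥ δ) + δ ⬝ᵥ (Φᵀ * W * Φ) *ᵥ δ := by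
  have hcross : (Φ *ᵥ δ) ⬝ᵥ W *ᵥ ε = (Φᵀ *ᵥ W *ᵥ ε) ⬝ᵥ δ := by
    rw [dotProduct_comm _ δ, dotProduct_mulVec δ, vecMul_transpose]
  have hswap : ε ⬝ᵥ W *ᵥ (Φ *ᵥ δ) = (Φ *ᵥ δ) ⬝ᵥ W *ᵥ ε := by
    rw [dotProduct_mulVec, ← mulVec_transpose, hW.eq, dotProduct_comm]
  have hquad : δ ⬝ᵥ (Φᵀ * W * Φ) *ᵥ δ = (Φ *ᵥ δ) ⬝ᵥ W *ᵥ (Φ *ᵥ δ) := by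
    rw [← mulVec_mulVec, ← mulVec_mulVec, dotProduct_mulVec δ, vecMul_transpose]
  rw [hquad, mulVec_sub, sub_dotProduct, dotProduct_sub, dotProduct_sub, hswap, hcross]
  ring

theorem abs_dotProduct_le_mul_sum_abs {ι : Type*} [Fintype ι] {u v : ι → ℝ} {c : ℝ}
    (hu : ∀ j, |u j| ≤ c) : |u ⬝ᵥ v| ≤ c * ∑ j, |v j| := by
  rw [mul_sum]
  refine (abs_sum_le_sum_abs _ _).trans (sum_le_sum fun j _ => ?_)
  rw [abs_mul]
  exact mul_le_mul_of_nonneg_right (hu j) (abs_nonneg _)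

theorem sum_abs_sub_sum_abs_le_of_support_subset {ι : Type*} [Fintype ι] [DecidableEq ι]
    {S : Finset ι} {θ₀ : ι → ℝ} (h : Function.support θ₀ ⊆ S) (θ : ι → ℝ) :
    ∑ j, |θ₀ j| - ∑ j, |θ j| ≤ ∑ j ∈ S, |θ j - θ₀ j| - ∑ j ∈ Sᶜ, |θ j - θ₀ j| := by
  have hzero : ∀ j ∈ Sᶜ, θ₀ j = 0 := fun j hj =>
    Function.notMem_support.mp fun hsupp => mem_compl.mp hj (h hsupp)
  rw [← sum_add_sum_compl S (fun j => |θ₀ j|), ← sum_add_sum_compl S (fun j => |θ j|)]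
  have hout₀ : ∑ j ∈ Sᶜ, |θ₀ j| = 0 :=
    sum_eq_zero fun j hj => by simp [hzero j hj]
  have hout : ∑ j ∈ Sᶜ, |θ j - θ₀ j| = ∑ j ∈ Sᶜ, |θ j| :=
    sum_congr rfl fun j hj => by simp [hzero j hj]
  have hin : ∑ j ∈ S, |θ₀ j| - ∑ j ∈ S, |θ j| ≤ ∑ j ∈ S, |θ j - θ₀ j| := by
    rw [← sum_sub_distrib]
    exact sum_le_sum fun j _ => abs_sub_comm (θ j) _ ▸ abs_sub_abs_le_abs_sub _ _
  linarith

theorem sum_abs_le_of_mul_sum_sq_le {ι : Type*} {S : Finset ι} {f : ι → ℝ} {c K : ℝ}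
    (hc : 0 < c) (hK : 0 ≤ K) (h : c * ∑ j ∈ S, f j ^ 2 ≤ K * ∑ j ∈ S, |f j|) :
    ∑ j ∈ S, |f j| ≤ K * #S / c := by
  set A := ∑ j ∈ S, |f j|
  have hcs : A ^ 2 ≤ #S * ∑ j ∈ S, f j ^ 2 := by
    simpa only [sq_abs] using sq_sum_le_card_mul_sum_sq (s := S) (f := fun j => |f j|)
  rw [le_div_iff₀ hc]
  have hA₀ : 0 ≤ A := sum_nonneg fun j _ => abs_nonneg (f j)
  rcases hA₀.eq_or_lt with hA | hA
  · rw [← hA, zero_mul]; positivity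
  · refine le_of_mul_le_mul_right ?_ hA
    nlinarith [mul_le_mul_of_nonneg_left hcs hc.le,
      mul_le_mul_of_nonneg_left h (Nat.cast_nonneg (α := ℝ) #S)]

theorem lasso_l1_error_bound_general
    (n p : ℕ)
    (Φ : Matrix (Fin n) (Fin p) ℝ) (W : Matrix (Fin n) (Fin n) ℝ)
    (hW : W.PosSemidef)
    (θ0 θhat : Fin p → ℝ)
    (S : Finset (Fin p)) (hS : ∀ j, j ∈ S ↔ θ0 j ≠ 0)
    (ε : Fin n → ℝ) (y : Fin n → ℝ) (hy : y = Φ.mulVec θ0 + ε)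
    (lam : ℝ) (hlam : 0 < lam) (c3 : ℝ) (hc3 : 0 < c3)
    (hbasic :
      (1 / (2 * (n : ℝ))) * ((y - Φ.mulVec θhat) ⬝ᵥ W.mulVec (y - Φ.mulVec θhat))
          + lam * ∑ j, |θhat j|
        ≤ (1 / (2 * (n : ℝ))) * ((y - Φ.mulVec θ0) ⬝ᵥ W.mulVec (y - Φ.mulVec θ0))
          + lam * ∑ j, |θ0 j|)
    (hnoise : ∀ j, |(Φᵀ.mulVec (W.mulVec ε)) j / (n : ℝ)| ≤ lam / 2)
    (hRE : ∀ a : Fin p → ℝ, (∑ j ∈ Sᶜ, |a j|) ≤ 3 * ∑ j ∈ S, |a j| →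
      c3 / 2 * (∑ j ∈ S, (a j) ^ 2) ≤ (1 / (n : ℝ)) * (a ⬝ᵥ (Φᵀ * W * Φ).mulVec a)) :
    ∑ j, |θhat j - θ0 j| ≤ 24 * lam * S.card / c3 := by
  set δ := θhat - θ0 with hδ
  have hres : y - Φ *ᵥ θhat = ε - Φ *ᵥ δ := by rw [hy, hδ, mulVec_sub]; abel
  have hres₀ : y - Φ *ᵥ θ0 = ε := by rw [hy]; abel
  rw [hres, hres₀, (isHermitian_iff_isSymm.mp hW.isHermitian).sub_mulVec_dotProduct_mulVec_sub]
    at hbasic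
  set Q := δ ⬝ᵥ (Φᵀ * W * Φ) *ᵥ δ
  set D := (Φᵀ *ᵥ W *ᵥ ε) ⬝ᵥ δ
  set A := ∑ j ∈ S, |δ j|
  set B := ∑ j ∈ Sᶜ, |δ j|
  have hQ : 0 ≤ 1 / (n : ℝ) * Q := by
    have := (hW.conjTranspose_mul_mul_same Φ).dotProduct_mulVec_nonneg δ
    simp only [star_trivial, conjTranspose_eq_transpose_of_trivial] at this
    positivity
  have hD : |(n : ℝ)⁻¹ * D| ≤ lam / 2 * (A + B) := by
    rw [← smul_eq_mul, ← smul_dotProduct, sum_add_sum_compl]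
    exact abs_dotProduct_le_mul_sum_abs fun j => by simpa [div_eq_inv_mul] using hnoise j
  have hl1 : ∑ j, |θ0 j| - ∑ j, |θhat j| ≤ A - B :=
    sum_abs_sub_sum_abs_le_of_support_subset (fun j hj => (hS j).mpr hj) θhat
  have hkey : 1 / (n : ℝ) * Q ≤ lam * (3 * A - B) := by
    have hexpand : 1 / (2 * (n : ℝ)) * (ε ⬝ᵥ W *ᵥ ε - 2 * D + Q)
        = 1 / (2 * (n : ℝ)) * (ε ⬝ᵥ W *ᵥ ε) - (n : ℝ)⁻¹ * D + 1 / (n : ℝ) * Q / 2 := by ring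
    linarith [(abs_le.mp hD).2, mul_le_mul_of_nonneg_left hl1 hlam.le]
  have hcone : B ≤ 3 * A := by
    have := (mul_nonneg_iff_of_pos_left hlam).mp (hQ.trans hkey)
    linarith
  have hA : A ≤ 3 * lam * S.card / (c3 / 2) := by
    have hB : 0 ≤ lam * B := mul_nonneg hlam.le (sum_nonneg fun j _ => abs_nonneg (δ j))
    have hRE' : c3 / 2 * ∑ j ∈ S, δ j ^ 2 ≤ 1 / (n : ℝ) * Q := hRE δ hcone
    exact sum_abs_le_of_mul_sum_sq_le (by positivity) (by positivity) (by linarith)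
  calc ∑ j, |θhat j - θ0 j| = A + B := (sum_add_sum_compl _ _).symm
    _ ≤ 4 * (3 * lam * S.card / (c3 / 2)) := by linarith
    _ = 24 * lam * S.card / c3 := by field_simp; ring

/-- Deterministic ℓ₁ estimation-error bound of Theorem 1(b):
`‖θ̂ − θ₀‖₁ ≤ 24 λ |S| / c₃`. -/
theorem lasso_l1_error_bound
    (n p : ℕ) (hn : 1 ≤ n) (hp : 1 ≤ p)
    (Φ : Matrix (Fin n) (Fin p) ℝ) (W : Matrix (Fin n) (Fin n) ℝ)
    (hW : W.PosSemidef)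
    (θ0 θhat : Fin p → ℝ)
    (S : Finset (Fin p)) (hS : ∀ j, j ∈ S ↔ θ0 j ≠ 0)
    (ε : Fin n → ℝ) (y : Fin n → ℝ) (hy : y = Φ.mulVec θ0 + ε)
    (lam : ℝ) (hlam : 0 < lam) (c3 : ℝ) (hc3 : 0 < c3)
    (hbasic :
      (1 / (2 * (n : ℝ))) * ((y - Φ.mulVec θhat) ⬝ᵥ W.mulVec (y - Φ.mulVec θhat))
          + lam * ∑ j, |θhat j|
        ≤ (1 / (2 * (n : ℝ))) * ((y - Φ.mulVec θ0) ⬝ᵥ W.mulVec (y - Φ.mulVec θ0))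
          + lam * ∑ j, |θ0 j|)
    (hnoise : ∀ j, |(Φᵀ.mulVec (W.mulVec ε)) j / (n : ℝ)| ≤ lam / 2)
    (hRE : ∀ a : Fin p → ℝ, (∑ j ∈ Sᶜ, |a j|) ≤ 3 * ∑ j ∈ S, |a j| →
      c3 / 2 * (∑ j ∈ S, (a j) ^ 2) ≤ (1 / (n : ℝ)) * (a ⬝ᵥ (Φᵀ * W * Φ).mulVec a)) :
    ∑ j, |θhat j - θ0 j| ≤ 24 * lam * S.card / c3 :=
  lasso_l1_error_bound_general n p Φ W hW θ0 θhat S hS ε y hy lam hlam c3 hc3 hbasic hnoise hRE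
end

section
/- Let d, q ≥ 1 be integers, let U₁,…,U_d ∈ ℝ, for each j ∈ {1,…,d} let B_j be a finite index set of size q with statistics U_k ∈ ℝ for k ∈ B_j, let N₀ ⊆ {1,…,d} and N_j ⊆ B_j, let t_p > 0, let G : ℝ → ℝ with G(t) > 0 on [0, t_p], and let α, ν₁, ν₂ ≥ 0. Define R(t) = Σ_{j=1}^d 1(|U_j| ≥ t) + Σ_{j=1}^d Σ_{k∈B_j} 1(|U_j| ≥ t, |U_k| ≥ t). Suppose t₀ ∈ [0, t_p] satisfies d·G(t₀)·(1 + q·G(t₀)) ≤ α·max(R(t₀), 1), and suppose for all t ∈ [0, t_p] both |Σ_{j∈N₀} 1(|U_j| ≥ t) − |N₀|·G(t)| ≤ ν₁·d·G(t) and |Σ_{j=1}^d Σ_{k∈N_j} 1(|U_j| ≥ t, |U_k| ≥ t) − (Σ_{j=1}^d |N_j|)·G(t)²| ≤ ν₂·d·q·G(t)². Then the overall false discovery proportion FDP(t₀) = (Σ_{j∈N₀} 1(|U_j| ≥ t₀) + Σ_{j=1}^d Σ_{k∈N_j} 1(|U_j| ≥ t₀, |U_k| ≥ t₀)) / max(R(t₀),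 1) satisfies FDP(t₀) ≤ α + d·G(t₀)·(ν₁ + q·G(t₀)·ν₂) / max(R(t₀), 1). -/
open Finset

/-- Deterministic bound (A.9) in the proof of Theorem 2: at the data-driven
threshold `t₀` chosen by the stopping rule of Algorithm 1, the overall false
discovery proportion of the hierarchical procedure satisfies
`FDP(t₀) ≤ α + dG(t₀)(ν₁ + qG(t₀)ν₂)/max(R(t₀),1)`. -/
theorem overall_fdp_bound
    (d q : ℕ) (hd : 1 ≤ d) (hq : 1 ≤ q)
    (U : Fin d → ℝ) (V : Fin d → Fin q → ℝ)
    (N0 : Finset (Fin d)) (N : Fin d → Finset (Fin q))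
    (tp : ℝ) (htp : 0 < tp)
    (G : ℝ → ℝ) (hGpos : ∀ t ∈ Set.Icc (0 : ℝ) tp, 0 < G t)
    (α ν1 ν2 : ℝ) (hα : 0 ≤ α) (hν1 : 0 ≤ ν1) (hν2 : 0 ≤ ν2)
    (R : ℝ → ℝ)
    (hRdef : ∀ t, R t = (∑ j, if t ≤ |U j| then (1 : ℝ) else 0)
      + ∑ j, ∑ k, if t ≤ |U j| ∧ t ≤ |V j k| then (1 : ℝ) else 0)
    (t0 : ℝ) (ht0 : t0 ∈ Set.Icc (0 : ℝ) tp)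
    (hstop : d * G t0 * (1 + q * G t0) ≤ α * max (R t0) 1)
    (hdev1 : ∀ t ∈ Set.Icc (0 : ℝ) tp,
      |(∑ j ∈ N0, if t ≤ |U j| then (1 : ℝ) else 0) - N0.card * G t| ≤ ν1 * d * G t)
    (hdev2 : ∀ t ∈ Set.Icc (0 : ℝ) tp,
      |(∑ j, ∑ k ∈ N j, if t ≤ |U j| ∧ t ≤ |V j k| then (1 : ℝ) else 0)
          - (∑ j, ((N j).card : ℝ)) * G t ^ 2| ≤ ν2 * d * q * G t ^ 2) :
    ((∑ j ∈ N0, if t0 ≤ |U j| then (1 : ℝ) else 0)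
        + ∑ j, ∑ k ∈ N j, if t0 ≤ |U j| ∧ t0 ≤ |V j k| then (1 : ℝ) else 0)
      / max (R t0) 1
    ≤ α + d * G t0 * (ν1 + q * G t0 * ν2) / max (R t0) 1 := by
  have hg0 : 0 < G t0 := hGpos t0 ht0
  have hM : (0:ℝ) < max (R t0) 1 := lt_of_lt_of_le one_pos (le_max_right _ _)
  have h1 := abs_le.mp (hdev1 t0 ht0)
  have h2 := abs_le.mp (hdev2 t0 ht0)
  have hcard1 : (N0.card : ℝ) ≤ d := by
    exact_mod_cast (N0.card_le_univ).trans_eq (by simp)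
  have hcard2 : (∑ j, ((N j).card : ℝ)) ≤ d * q := by
    have : ∀ j : Fin d, ((N j).card : ℝ) ≤ q := by
      intro j; exact_mod_cast ((N j).card_le_univ).trans_eq (by simp)
    calc (∑ j, ((N j).card : ℝ)) ≤ ∑ _j : Fin d, (q:ℝ) := Finset.sum_le_sum (fun j _ => this j)
      _ = d * q := by simp [mul_comm]
  have hg2 : (0:ℝ) ≤ G t0 ^ 2 := sq_nonneg _
  have hnum : (∑ j ∈ N0, if t0 ≤ |U j| then (1:ℝ) else 0)
      + (∑ j, ∑ k ∈ N j, if t0 ≤ |U j| ∧ t0 ≤ |V j k| then (1:ℝ) else 0)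
      ≤ α * max (R t0) 1 + d * G t0 * (ν1 + q * G t0 * ν2) := by
    have e1 : (N0.card : ℝ) * G t0 ≤ d * G t0 :=
      mul_le_mul_of_nonneg_right hcard1 hg0.le
    have e2 : (∑ j, ((N j).card : ℝ)) * G t0 ^ 2 ≤ (d * q) * G t0 ^ 2 :=
      mul_le_mul_of_nonneg_right hcard2 hg2
    nlinarith [h1.2, h2.2, hstop, sq_nonneg (G t0)]
  rw [div_le_iff₀ hM]
  have hX : d * G t0 * (ν1 + q * G t0 * ν2) / max (R t0) 1 * max (R t0) 1
      = d * G t0 * (ν1 + q * G t0 * ν2) := div_mul_cancel₀ _ hM.ne'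
  nlinarith [hnum]
end
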